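/- arXiv:2503.07594 — 2 statements merged into one kernel-verified Lean document; each statement's English description precedes it below -/
import Mathlib

section
/- Let A be a symmetric real d×d matrix with μ·Id ⪯ A ⪯ L·Id for reals 0 < μ ≤ L, let 0 < γ ≤ 1/L, and let H ≥ 1 be an integer. Then the operator norm satisfies ‖ Id − (1/H) Σ_{h=0}^{H−1} (Id − γA)^{H−h−1} ‖ ≤ γ(H−1)L/2. -/
/-!
Write `S = Id - γA`. The norm of a symmetric operator is the supremum of `|⟨Tx, x⟩| / ‖x‖²`, and
`0 ⪯ A ⪯ L·Id` puts `⟨Sx, x⟩ / ‖x‖²` in `[1 - γL, 1] ⊆ [-1, 1]`; hence `‖S‖ ≤ 1`, and likewise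
`‖Id - S‖ = γ‖A‖ ≤ γL`.

In any normed ring, `‖S‖ ≤ 1` makes `k ↦ ‖Id - S^k‖` grow at most linearly,
`‖Id - S^k‖ ≤ k ‖Id - S‖`, since `Id - S^(k+1) = (Id - S) + S (Id - S^k)`. After reindexing,
the matrix in question is the average of `Id - S^k` over `k < H`, whose norm is therefore at most
`(1/H) ∑_{k<H} k γL = (H-1) γL / 2`.
-/

open MeasureTheory Finset

noncomputable section

namespace Scaffold

/-- Euclidean parameter space `ℝ^d`. -/
abbrev E (d : ℕ) : Type := EuclideanSpace ℝ (Fin d)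

/-- Global state: a parameter together with `N` control variates. -/
abbrev State (d N : ℕ) : Type := E d × (Fin N → E d)

variable {d N : ℕ} {Z : Type*} [MeasurableSpace Z]

/-- Local objective `f_c θ = ∫ F_c(z, θ) dν_c(z)`. -/
def fLoc (F : Fin N → Z → E d → ℝ) (ν : Fin N → Measure Z) (c : Fin N) (θ : E d) : ℝ :=
  ∫ z, F c z θ ∂(ν c)

/-- Global objective `f = (1/N) ∑ f_c`. -/
def fGlob (F : Fin N → Z → E d → ℝ) (ν : Fin N → Measure Z) (θ : E d) : ℝ :=
  (N : ℝ)⁻¹ * ∑ c, fLoc F ν c θ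

/-- One local Scaffold step `T_c(θ, ξ; z) = θ - γ(∇F_c(z, θ) + ξ)`. -/
def locStep (Fc : Z → E d → ℝ) (γ : ℝ) (θ ξ : E d) (z : Z) : E d :=
  θ - γ • (gradient (Fc z) θ + ξ)

/-- `h` local Scaffold steps `T_c^h(θ, ξ; z^{1:h})`. -/
def locIter (Fc : Z → E d → ℝ) (γ : ℝ) (ξ : E d) : (h : ℕ) → E d → (Fin h → Z) → E d
  | 0, θ, _ => θ
  | h + 1, θ, z => locStep Fc γ (locIter Fc γ ξ h θ fun i => z i.castSucc) ξ (z (Fin.last h))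

/-- `h ≤ H` local steps driven by the first `h` coordinates of `z : Fin H → Z`. -/
def locIterLE (Fc : Z → E d → ℝ) (γ : ℝ) (ξ θ : E d) {H : ℕ} (z : Fin H → Z)
    (h : ℕ) (hh : h ≤ H) : E d :=
  locIter Fc γ ξ h θ fun i => z (Fin.castLE hh i)

/-- The Scaffold map `S(θ, ξ_{1:N}; z)`. -/
def scaffoldMap (F : Fin N → Z → E d → ℝ) (γ : ℝ) (H : ℕ)
    (X : State d N) (z : Fin N → Fin H → Z) : State d N :=
  ((N : ℝ)⁻¹ • ∑ c, locIter (F c) γ (X.2 c) H X.1 (z c),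
    fun c => X.2 c + (γ * (H : ℝ))⁻¹ •
      (locIter (F c) γ (X.2 c) H X.1 (z c)
        - (N : ℝ)⁻¹ • ∑ c', locIter (F c') γ (X.2 c') H X.1 (z c')))

/-- Squared Λ-norm `‖(θ, ξ_{1:N})‖_Λ² = ‖θ‖² + (γ²H²/N) ∑ ‖ξ_c‖²`. -/
def lamNormSq (γ : ℝ) (H : ℕ) (X : State d N) : ℝ :=
  ‖X.1‖ ^ 2 + γ ^ 2 * (H : ℝ) ^ 2 / (N : ℝ) * ∑ c, ‖X.2 c‖ ^ 2

/-- Membership in the state space `𝒳`: control variates sum to zero. -/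
def mem𝒳 (X : State d N) : Prop := ∑ c, X.2 c = 0

/-- One-round noise law `𝔪 = ⊗_c ν_c^{⊗H}`. -/
def noiseLaw (ν : Fin N → Measure Z) (H : ℕ) : Measure (Fin N → Fin H → Z) :=
  Measure.pi fun c => Measure.pi fun _ : Fin H => ν c

/-- `π` is a stationary distribution of Scaffold. -/
def IsStationary (F : Fin N → Z → E d → ℝ) (ν : Fin N → Measure Z) (γ : ℝ) (H : ℕ)
    (π : Measure (State d N)) : Prop :=
  ∀ φ : State d N → ℝ, Measurable φ → (∃ C, ∀ X, |φ X| ≤ C) →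
    ∫ X, φ X ∂π = ∫ X, (∫ z, φ (scaffoldMap F γ H X z) ∂(noiseLaw ν H)) ∂π

/-- Optimal control variate `ξ*_c = -∇f_c(θ*)`. -/
def xiStar (F : Fin N → Z → E d → ℝ) (ν : Fin N → Measure Z) (θstar : E d) (c : Fin N) : E d :=
  -gradient (fLoc F ν c) θstar

/-- Optimal state `X* = (θ*, ξ*_1, …, ξ*_N)`. -/
def Xopt (F : Fin N → Z → E d → ℝ) (ν : Fin N → Measure Z) (θstar : E d) : State d N :=
  (θstar, fun c => xiStar F ν θstar c)

/-- `T` rounds of Scaffold started from `X`. -/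
def iterMap (F : Fin N → Z → E d → ℝ) (γ : ℝ) (H : ℕ) :
    (T : ℕ) → State d N → (Fin T → Fin N → Fin H → Z) → State d N
  | 0, X, _ => X
  | T + 1, X, zs =>
      scaffoldMap F γ H (iterMap F γ H T X fun i => zs i.castSucc) (zs (Fin.last T))

/-- Law of the iterate `X^t` when `X⁰ ∼ ρ`, independent of the i.i.d. noise. -/
def lawAt (F : Fin N → Z → E d → ℝ) (ν : Fin N → Measure Z) (γ : ℝ) (H : ℕ)
    (ρ : Measure (State d N)) (t : ℕ) : Measure (State d N) :=
  Measure.map (fun p : State d N × (Fin t → Fin N → Fin H → Z) => iterMap F γ H t p.1 p.2)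
    (ρ.prod (Measure.pi fun _ : Fin t => noiseLaw ν H))

/-- Squared 2-Wasserstein distance for the Λ-norm. -/
def W2sq (γ : ℝ) (H : ℕ) (ρ₁ ρ₂ : Measure (State d N)) : ℝ :=
  sInf {r : ℝ | ∃ ξ : Measure (State d N × State d N), IsProbabilityMeasure ξ ∧
    ξ.map Prod.fst = ρ₁ ∧ ξ.map Prod.snd = ρ₂ ∧
    r = ∫ p, lamNormSq γ H (p.1 - p.2) ∂ξ}

/-- Regularity and well-posedness assumptions from the context: `ν_c` are probability
measures, `F_c` and `∇F_c` are jointly measurable, integrable in `z`, the gradient of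
`f_c` is obtained by differentiation under the integral, and `θ*` is the unique minimizer
of `f` with `∇f(θ*) = 0`. -/
def Setup (F : Fin N → Z → E d → ℝ) (ν : Fin N → Measure Z) (θstar : E d) : Prop :=
  (∀ c, IsProbabilityMeasure (ν c)) ∧
  (∀ c, Measurable (Function.uncurry (F c))) ∧
  (∀ c, Measurable fun p : Z × E d => gradient (F c p.1) p.2) ∧
  (∀ c θ, Integrable (fun z => F c z θ) (ν c)) ∧
  (∀ c θ, Integrable (fun z => gradient (F c z) θ) (ν c)) ∧
  (∀ c θ, gradient (fLoc F ν c) θ = ∫ z, gradient (F c z) θ ∂(ν c)) ∧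
  (∀ θ, fGlob F ν θstar ≤ fGlob F ν θ) ∧
  (∀ θ', (∀ θ, fGlob F ν θ' ≤ fGlob F ν θ) → θ' = θstar) ∧
  gradient (fGlob F ν) θstar = 0

/-- Assumption (A1): each `f_c` is twice continuously differentiable and μ-strongly convex. -/
def A1 (F : Fin N → Z → E d → ℝ) (ν : Fin N → Measure Z) (μ : ℝ) : Prop :=
  ∀ c, ContDiff ℝ 2 (fLoc F ν c) ∧ StrongConvexOn Set.univ μ (fLoc F ν c)

/-- Assumption (A2): each `F_c(z, ·)` is convex, twice differentiable, with L-Lipschitz gradient. -/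
def A2 (F : Fin N → Z → E d → ℝ) (L : ℝ) : Prop :=
  ∀ c z, ConvexOn ℝ Set.univ (F c z) ∧ Differentiable ℝ (F c z) ∧
    Differentiable ℝ (gradient (F c z)) ∧
    ∀ θ θ', ‖gradient (F c z) θ - gradient (F c z) θ'‖ ≤ L * ‖θ - θ'‖

/-- Assumption (A3): each `f_c` is thrice continuously differentiable with
`‖∇³f_c(θ)[u,u]‖ ≤ Q ‖u‖²`. -/
def A3 (F : Fin N → Z → E d → ℝ) (ν : Fin N → Measure Z) (Q : ℝ) : Prop :=
  ∀ c, ContDiff ℝ 3 (fLoc F ν c) ∧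
    ∀ θ u : E d, ‖fderiv ℝ (fderiv ℝ (gradient (fLoc F ν c))) θ u u‖ ≤ Q * ‖u‖ ^ 2

/-- Assumption (A4): heterogeneity bounds at `θ*`. -/
def A4 (F : Fin N → Z → E d → ℝ) (ν : Fin N → Measure Z) (θstar : E d) (ζ₁ ζ₂ : ℝ) : Prop :=
  ((N : ℝ)⁻¹ * ∑ c, ‖gradient (fLoc F ν c) θstar - gradient (fGlob F ν) θstar‖ ^ 2 ≤ ζ₁ ^ 2) ∧
  ((N : ℝ)⁻¹ * ∑ c,
      ‖fderiv ℝ (gradient (fLoc F ν c)) θstar - fderiv ℝ (gradient (fGlob F ν)) θstar‖ ^ 2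
        ≤ ζ₂ ^ 2)

/-- Assumption (A5): moment bounds on the gradient noise, for `p ∈ {1,2,3}`. -/
def A5 (F : Fin N → Z → E d → ℝ) (ν : Fin N → Measure Z) (θstar : E d) (σstar β : ℝ) : Prop :=
  ∀ c θ, ∀ p : ℕ, p ∈ ({1, 2, 3} : Set ℕ) →
    (∫ z, ‖gradient (F c z) θ - gradient (fLoc F ν c) θ‖ ^ (2 * p) ∂(ν c)) ^ ((p : ℝ)⁻¹)
      ≤ σstar ^ 2 + β * ‖θ - θstar‖ ^ 2

/-- The contraction operator `B_c = Id - γ ∇²f_c(θ*)`. -/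
def Bmat (F : Fin N → Z → E d → ℝ) (ν : Fin N → Measure Z) (γ : ℝ) (θstar : E d)
    (c : Fin N) : E d →L[ℝ] E d :=
  ContinuousLinearMap.id ℝ (E d) - γ • fderiv ℝ (gradient (fLoc F ν c)) θstar

/-- Taylor remainder
`R_c(θ, ξ_c; z^{1:H}) = ∑_{h<H} B_c^{H-h-1} ∫₀¹ (1-t) ∇³f_c(θ* + t(T^h-θ*))[T^h-θ*, T^h-θ*] dt`. -/
def taylorRem (F : Fin N → Z → E d → ℝ) (ν : Fin N → Measure Z) (γ : ℝ) (θstar : E d)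
    (c : Fin N) {H : ℕ} (θ ξ : E d) (z : Fin H → Z) : E d :=
  ∑ h : Fin H,
    (Bmat F ν γ θstar c ^ (H - (h : ℕ) - 1))
      (∫ t in (0 : ℝ)..1, (1 - t) •
        fderiv ℝ (fderiv ℝ (gradient (fLoc F ν c)))
          (θstar + t • (locIterLE (F c) γ ξ θ z (h : ℕ) h.isLt.le - θstar))
          (locIterLE (F c) γ ξ θ z (h : ℕ) h.isLt.le - θstar)
          (locIterLE (F c) γ ξ θ z (h : ℕ) h.isLt.le - θstar))

/-- Operator norm of a real `n × n` matrix induced by the Euclidean norm. -/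
def matOpNorm {n : ℕ} (M : Matrix (Fin n) (Fin n) ℝ) : ℝ :=
  ‖Matrix.toEuclideanCLM (𝕜 := ℝ) M‖

end Scaffold

open scoped RealInnerProductSpace ComplexOrder

section NormedRing

variable {R : Type*} [NormedRing R]

theorem norm_one_sub_pow_le {S : R} (hS : ‖S‖ ≤ 1) (k : ℕ) : ‖1 - S ^ k‖ ≤ k * ‖1 - S‖ := by
  induction k with
  | zero => simp
  | succ k ih =>
    calc ‖1 - S ^ (k + 1)‖ = ‖(1 - S) + S * (1 - S ^ k)‖ := by
          rw [pow_succ']; noncomm_ring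
      _ ≤ ‖1 - S‖ + ‖S‖ * ‖1 - S ^ k‖ := (norm_add_le _ _).trans (by gcongr; exact norm_mul_le _ _)
      _ ≤ ‖1 - S‖ + 1 * (k * ‖1 - S‖) := by gcongr
      _ = (k + 1 : ℕ) * ‖1 - S‖ := by push_cast; ring

theorem norm_one_sub_inv_smul_sum_pow_le [NormedSpace ℝ R] {S : R} (hS : ‖S‖ ≤ 1) {n : ℕ}
    (hn : 0 < n) :
    ‖1 - (n : ℝ)⁻¹ • ∑ k ∈ Finset.range n, S ^ k‖ ≤ ((n : ℝ) - 1) / 2 * ‖1 - S‖ := by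
  have hn' : (n : ℝ) ≠ 0 := by positivity
  have haverage : 1 - (n : ℝ)⁻¹ • ∑ k ∈ Finset.range n, S ^ k
      = (n : ℝ)⁻¹ • ∑ k ∈ Finset.range n, (1 - S ^ k) := by
    rw [Finset.sum_sub_distrib, Finset.sum_const, Finset.card_range, smul_sub,
      ← Nat.cast_smul_eq_nsmul ℝ, smul_smul, inv_mul_cancel₀ hn', one_smul]
  have hgauss : ∑ k ∈ Finset.range n, (k : ℝ) = n * ((n : ℝ) - 1) / 2 := by
    have := congrArg (Nat.cast (R := ℝ)) (Finset.sum_range_id_mul_two n)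
    push_cast [Nat.cast_sub hn] at this
    linarith
  calc ‖1 - (n : ℝ)⁻¹ • ∑ k ∈ Finset.range n, S ^ k‖
      ≤ (n : ℝ)⁻¹ * ∑ k ∈ Finset.range n, ‖1 - S ^ k‖ := by
        rw [haverage]
        refine (norm_smul_le _ _).trans ?_
        rw [norm_inv, Real.norm_natCast]
        gcongr
        exact norm_sum_le _ _
    _ ≤ (n : ℝ)⁻¹ * ∑ k ∈ Finset.range n, (k : ℝ) * ‖1 - S‖ := by
        gcongr with k
        exact norm_one_sub_pow_le hS k
    _ = ((n : ℝ) - 1) / 2 * ‖1 - S‖ := by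
        rw [← Finset.sum_mul, hgauss]
        field_simp

end NormedRing

namespace ContinuousLinearMap

variable {E : Type*} [NormedAddCommGroup E] [InnerProductSpace ℝ E] {T : E →L[ℝ] E} {L : ℝ}

theorem norm_le_of_forall_abs_inner_le (hT : T.IsSymmetric) {c : ℝ} (hc : 0 ≤ c)
    (h : ∀ x, |⟪T x, x⟫| ≤ c * ‖x‖ ^ 2) : ‖T‖ ≤ c := by
  rw [T.norm_eq_iSup_rayleighQuotient hT]
  refine ciSup_le fun x => ?_
  rw [rayleighQuotient, reApplyInnerSelf_apply, RCLike.re_to_real, abs_div, abs_sq]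
  rcases eq_or_ne x 0 with rfl | hx
  · simpa using hc
  · exact div_le_of_le_mul₀ (by positivity) hc (h x)

theorem inner_apply_self_le_of_isPositive_smul_one_sub (hTL : (L • 1 - T).IsPositive) (x : E) :
    ⟪T x, x⟫ ≤ L * ‖x‖ ^ 2 := by
  have := hTL.inner_nonneg_left x
  simp only [sub_apply, smul_apply, one_apply_eq_self, inner_sub_left,
    real_inner_smul_left, real_inner_self_eq_norm_sq] at this
  linarith

theorem IsPositive.norm_le (hT : T.IsPositive) (hTL : (L • 1 - T).IsPositive) (hL : 0 ≤ L) :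
    ‖T‖ ≤ L := by
  refine norm_le_of_forall_abs_inner_le hT.isSymmetric hL fun x => abs_le.mpr ⟨?_, ?_⟩
  · nlinarith [hT.inner_nonneg_left x, sq_nonneg ‖x‖]
  · exact inner_apply_self_le_of_isPositive_smul_one_sub hTL x

theorem IsPositive.norm_one_sub_smul_le_one (hT : T.IsPositive) (hTL : (L • 1 - T).IsPositive)
    {γ : ℝ} (hγ : 0 ≤ γ) (hγL : γ * L ≤ 2) : ‖1 - γ • T‖ ≤ 1 := by
  have hsymm : (1 - γ • T).IsSymmetric := fun x y => by
    simp [inner_sub_left, inner_sub_right, real_inner_smul_left, real_inner_smul_right,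
      hT.inner_left_eq_inner_right x y]
  refine norm_le_of_forall_abs_inner_le hsymm zero_le_one fun x => ?_
  have hinner : ⟪(1 - γ • T) x, x⟫ = ‖x‖ ^ 2 - γ * ⟪T x, x⟫ := by
    simp only [sub_apply, smul_apply, one_apply_eq_self, inner_sub_left,
      real_inner_smul_left, real_inner_self_eq_norm_sq]
  have h₀ := hT.inner_nonneg_left x
  have hL := inner_apply_self_le_of_isPositive_smul_one_sub hTL x
  rw [hinner, abs_le]
  constructor <;> nlinarith [sq_nonneg ‖x‖]

theorem IsPositive.norm_one_sub_inv_smul_sum_pow_le (hT : T.IsPositive)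
    (hTL : (L • 1 - T).IsPositive) (hL : 0 ≤ L) {γ : ℝ} (hγ : 0 ≤ γ) (hγL : γ * L ≤ 2) {n : ℕ}
    (hn : 0 < n) :
    ‖1 - (n : ℝ)⁻¹ • ∑ k ∈ Finset.range n, (1 - γ • T) ^ k‖ ≤ γ * ((n : ℝ) - 1) * L / 2 := by
  have hgap : ‖1 - (1 - γ • T)‖ ≤ γ * L := by
    rw [sub_sub_cancel, norm_smul, Real.norm_of_nonneg hγ]
    exact mul_le_mul_of_nonneg_left (hT.norm_le hTL hL) hγ
  calc _ ≤ ((n : ℝ) - 1) / 2 * ‖1 - (1 - γ • T)‖ :=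
        _root_.norm_one_sub_inv_smul_sum_pow_le (hT.norm_one_sub_smul_le_one hTL hγ hγL) hn
    _ ≤ ((n : ℝ) - 1) / 2 * (γ * L) := by
        gcongr
        linarith [(Nat.one_le_cast (α := ℝ)).mpr hn]
    _ = γ * ((n : ℝ) - 1) * L / 2 := by ring

end ContinuousLinearMap

theorem Matrix.isPositive_toEuclideanCLM_iff {𝕜 n : Type*} [RCLike 𝕜] [Fintype n] [DecidableEq n]
    {M : Matrix n n 𝕜} : (toEuclideanCLM (𝕜 := 𝕜) (n := n) M).IsPositive ↔ M.PosSemidef := by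
  rw [← ContinuousLinearMap.isPositive_toLinearMap_iff, coe_toEuclideanCLM_eq_toEuclideanLin,
    isPositive_toEuclideanLin_iff]

namespace Scaffold

theorem shifted_matrix_average_bound_general
    {d : ℕ} (A : Matrix (Fin d) (Fin d) ℝ) (μ L γ : ℝ) (H : ℕ)
    (hμ : 0 < μ) (hγ : 0 < γ) (hγL : γ ≤ 1 / L) (hH : 1 ≤ H)
    (hlower : (A - μ • (1 : Matrix (Fin d) (Fin d) ℝ)).PosSemidef)
    (hupper : (L • (1 : Matrix (Fin d) (Fin d) ℝ) - A).PosSemidef) :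
    matOpNorm ((1 : Matrix (Fin d) (Fin d) ℝ)
        - (H : ℝ)⁻¹ • ∑ h ∈ Finset.range H, ((1 : Matrix (Fin d) (Fin d) ℝ) - γ • A) ^ (H - h - 1))
      ≤ γ * ((H : ℝ) - 1) * L / 2 := by
  have hL : 0 < L := by
    by_contra! hL
    exact (hγ.trans_le hγL).not_ge (one_div_nonpos.mpr hL)
  have hγL' : γ * L ≤ 1 := by rwa [le_div_iff₀ hL] at hγL
  set T := Matrix.toEuclideanCLM (𝕜 := ℝ) (n := Fin d) A
  have hT : T.IsPositive := Matrix.isPositive_toEuclideanCLM_iff.mpr <| by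
    simpa using hlower.add (Matrix.PosSemidef.one.smul hμ.le)
  have hTL : (L • 1 - T).IsPositive := by
    simpa [T] using Matrix.isPositive_toEuclideanCLM_iff.mpr hupper
  have hreflect : ∑ h ∈ Finset.range H, ((1 : Matrix (Fin d) (Fin d) ℝ) - γ • A) ^ (H - h - 1)
      = ∑ k ∈ Finset.range H, (1 - γ • A) ^ k := by
    simpa only [Nat.sub_right_comm] using Finset.sum_range_reflect (fun k => (1 - γ • A) ^ k) H
  calc matOpNorm _ = ‖1 - (H : ℝ)⁻¹ • ∑ k ∈ Finset.range H, (1 - γ • T) ^ k‖ := by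
        simp [matOpNorm, hreflect, T, map_sum]
    _ ≤ γ * ((H : ℝ) - 1) * L / 2 :=
        hT.norm_one_sub_inv_smul_sum_pow_le hTL hL.le hγ.le (by linarith) hH

/-- Lemma: bound on `Id − (1/H) ∑_{h<H} (Id − γA)^{H−h−1}`. -/
theorem shifted_matrix_average_bound
    {d : ℕ} (hd : 1 ≤ d) (A : Matrix (Fin d) (Fin d) ℝ) (μ L γ : ℝ) (H : ℕ)
    (hμ : 0 < μ) (hμL : μ ≤ L) (hγ : 0 < γ) (hγL : γ ≤ 1 / L) (hH : 1 ≤ H)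
    (hsymm : A.IsSymm)
    (hlower : (A - μ • (1 : Matrix (Fin d) (Fin d) ℝ)).PosSemidef)
    (hupper : (L • (1 : Matrix (Fin d) (Fin d) ℝ) - A).PosSemidef) :
    matOpNorm ((1 : Matrix (Fin d) (Fin d) ℝ)
        - (H : ℝ)⁻¹ • ∑ h ∈ Finset.range H, ((1 : Matrix (Fin d) (Fin d) ℝ) - γ • A) ^ (H - h - 1))
      ≤ γ * ((H : ℝ) - 1) * L / 2 :=
  shifted_matrix_average_bound_general A μ L γ H hμ hγ hγL hH hlower hupper

end Scaffold
end
end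

section
/- Suppose each f_c is twice continuously differentiable and thrice continuously differentiable. Fix c ∈ {1,…,N}, θ, ξ_c ∈ ℝ^d and z^{1:H} = (z^1,…,z^H) ∈ Z^H. Write B_c := Id − γ∇²f_c(θ*), ξ*_c := −∇f_c(θ*), and T^h := T_c^h(θ,ξ_c;z^{1:h}) for h ∈ {0,…,H}. Then T^H − θ* = B_c^H (θ − θ*) − γ Σ_{h=0}^{H−1} B_c^{H−h−1} (ξ_c − ξ*_c) − γ Σ_{h=0}^{H−1} B_c^{H−h−1} ∫₀¹ (1−t) ∇³f_c(θ* + t(T^h − θ*))[T^h − θ*, T^h − θ*] dt − γ Σ_{h=0}^{H−1} B_c^{H−h−1} ( ∇_θF_c(z^{h+1}, T^h) − ∇f_c(T^h) ). -/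
open MeasureTheory Finset

noncomputable section

/-!
Since `ξ*_c = -∇f_c(θ*)`, Taylor's formula with integral remainder for `∇f_c` at `θ*` turns
one local step into the affine recursion
`T(x) - θ* = B_c (x - θ*) - γ ((ξ_c - ξ*_c) + R(x) + (∇F_c(z, x) - ∇f_c(x)))`,
where `R(x)` is the second-order remainder. Unrolling it over `H` steps (discrete variation of
constants) gives the expansion.
-/

theorem map_add_eq_add_fderiv_add_integral_fderiv_fderiv {E F : Type*} [NormedAddCommGroup E]
    [NormedSpace ℝ E] [NormedAddCommGroup F] [NormedSpace ℝ F] [CompleteSpace F] {g : E → F}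
    (hg : ContDiff ℝ 2 g) (a u : E) :
    g (a + u) = g a + fderiv ℝ g a u
      + ∫ t in (0 : ℝ)..1, (1 - t) • fderiv ℝ (fderiv ℝ g) (a + t • u) u u := by
  have h := map_add_eq_sum_add_integral_iteratedFDeriv (n := 1) (x := a) (y := u)
    fun t _ => hg.contDiffAt
  simpa [Finset.sum_range_succ, iteratedFDeriv_one_apply, iteratedFDeriv_two_apply] using h

theorem ContDiff.gradient {E : Type*} [NormedAddCommGroup E] [InnerProductSpace ℝ E]
    [CompleteSpace E] {f : E → ℝ} {m n : WithTop ℕ∞} (hf : ContDiff ℝ n f) (hmn : m + 1 ≤ n) :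
    ContDiff ℝ m (gradient f) :=
  (InnerProductSpace.toDual ℝ E).symm.contDiff.comp (hf.fderiv_right hmn)

theorem ContinuousLinearMap.last_eq_pow_apply_add_sum_of_succ_eq {R M : Type*} [Semiring R]
    [AddCommMonoid M] [Module R M] [TopologicalSpace M] (B : M →L[R] M) :
    ∀ {H : ℕ} (e : Fin (H + 1) → M) (w : Fin H → M),
      (∀ h : Fin H, e h.succ = B (e h.castSucc) + w h) →
        e (Fin.last H) = (B ^ H) (e 0) + ∑ h : Fin H, (B ^ (H - h - 1)) (w h)
  | 0, e, _, _ => by simp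
  | H + 1, e, w, he => by
    have ih := last_eq_pow_apply_add_sum_of_succ_eq B (fun h => e h.castSucc)
      (fun h => w h.castSucc) fun h => he h.castSucc
    rw [← Fin.succ_last, he, Fin.sum_univ_castSucc, ← Fin.castSucc_zero, ih, map_add, map_sum]
    have pow_succ_apply (n : ℕ) (x : M) : (B ^ (n + 1)) x = B ((B ^ n) x) := by
      rw [pow_succ']; rfl
    have exponent (h : Fin H) : H + 1 - h.castSucc - 1 = (H - h - 1) + 1 := by
      simp only [Fin.val_castSucc]; omega
    simp only [exponent, pow_succ_apply, Fin.val_last, add_tsub_cancel_left, Nat.sub_self,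
      pow_zero, one_apply_eq_self, add_assoc]

namespace Scaffold

theorem locIterLE_succ {d : ℕ} {Z : Type*} (Fc : Z → E d → ℝ) (γ : ℝ) (ξ θ : E d) {H : ℕ}
    (z : Fin H → Z) (h : Fin H) :
    locIterLE Fc γ ξ θ z (h + 1) h.isLt =
      locStep Fc γ (locIterLE Fc γ ξ θ z h h.isLt.le) ξ (z h) :=
  rfl

theorem locStep_sub_eq {d N : ℕ} {Z : Type*} [MeasurableSpace Z] (F : Fin N → Z → E d → ℝ)
    (ν : Fin N → Measure Z) (γ : ℝ) (θstar : E d) (c : Fin N) (hf : ContDiff ℝ 3 (fLoc F ν c))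
    (x ξ : E d) (z : Z) :
    locStep (F c) γ x ξ z - θstar
      = Bmat F ν γ θstar c (x - θstar)
        - γ • ((ξ - xiStar F ν θstar c)
          + (∫ t in (0 : ℝ)..1, (1 - t) •
              fderiv ℝ (fderiv ℝ (gradient (fLoc F ν c)))
                (θstar + t • (x - θstar)) (x - θstar) (x - θstar))
          + (gradient (F c z) x - gradient (fLoc F ν c) x)) := by
  have taylor := map_add_eq_add_fderiv_add_integral_fderiv_fderiv
    (hf.gradient (by norm_num)) θstar (x - θstar)
  rw [add_sub_cancel] at taylor
  simp only [locStep, Bmat, xiStar, sub_apply, ContinuousLinearMap.id_apply, smul_apply, taylor]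
  module

theorem scaffold_local_update_expansion_general
    {d N H : ℕ} {Z : Type*} [MeasurableSpace Z]
    (γ : ℝ)
    (F : Fin N → Z → E d → ℝ) (ν : Fin N → Measure Z) (θstar : E d)
    (hsmooth : ∀ c, ContDiff ℝ 2 (fLoc F ν c) ∧ ContDiff ℝ 3 (fLoc F ν c)) :
    ∀ (c : Fin N) (θ ξc : E d) (z : Fin H → Z),
      locIter (F c) γ ξc H θ z - θstar
        = (Bmat F ν γ θstar c ^ H) (θ - θstar)
          - γ • ∑ h : Fin H,
              (Bmat F ν γ θstar c ^ (H - (h : ℕ) - 1)) (ξc - xiStar F ν θstar c)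
          - γ • taylorRem F ν γ θstar c θ ξc z
          - γ • ∑ h : Fin H,
              (Bmat F ν γ θstar c ^ (H - (h : ℕ) - 1))
                (gradient (F c (z h)) (locIterLE (F c) γ ξc θ z (h : ℕ) h.isLt.le)
                  - gradient (fLoc F ν c) (locIterLE (F c) γ ξc θ z (h : ℕ) h.isLt.le)) := by
  intro c θ ξc z
  set T : Fin (H + 1) → E d := fun h => locIterLE (F c) γ ξc θ z h h.is_le
  have expansion := (Bmat F ν γ θstar c).last_eq_pow_apply_add_sum_of_succ_eq
    (fun h => T h - θstar) _ fun h => by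
      change locIterLE (F c) γ ξc θ z (h + 1) h.isLt - θstar = _
      rw [locIterLE_succ, locStep_sub_eq F ν γ θstar c (hsmooth c).2, sub_eq_add_neg]
      rfl
  simp only [map_neg, map_smul, map_add, sum_neg_distrib, sum_add_distrib, ← smul_sum] at expansion
  rw [taylorRem]
  refine expansion.trans ?_
  rw [show T 0 = θ from rfl, smul_add, smul_add]
  abel

/-- Lemma: exact expansion of the local updates.
`T^H − θ* = B_c^H (θ−θ*) − γ Σ_h B_c^{H−h−1} (ξ_c−ξ*_c) − γ·(Taylor remainder)
− γ Σ_h B_c^{H−h−1} (∇F_c(z^{h+1}, T^h) − ∇f_c(T^h))`. -/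
theorem scaffold_local_update_expansion
    {d N H : ℕ} {Z : Type*} [MeasurableSpace Z]
    (hd : 1 ≤ d) (hN : 1 ≤ N) (hH : 1 ≤ H)
    (γ : ℝ) (hγ : 0 < γ)
    (F : Fin N → Z → E d → ℝ) (ν : Fin N → Measure Z) (θstar : E d)
    (hν : ∀ c, IsProbabilityMeasure (ν c))
    (hFmeas : ∀ c, Measurable (Function.uncurry (F c)))
    (hGmeas : ∀ c, Measurable fun p : Z × E d => gradient (F c p.1) p.2)
    (hFint : ∀ c θ, Integrable (fun z => F c z θ) (ν c))
    (hGint : ∀ c θ, Integrable (fun z => gradient (F c z) θ) (ν c))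
    (hswap : ∀ c θ, gradient (fLoc F ν c) θ = ∫ z, gradient (F c z) θ ∂(ν c))
    (hFdiff : ∀ c z, Differentiable ℝ (F c z))
    (hcrit : gradient (fGlob F ν) θstar = 0)
    (hsmooth : ∀ c, ContDiff ℝ 2 (fLoc F ν c) ∧ ContDiff ℝ 3 (fLoc F ν c)) :
    ∀ (c : Fin N) (θ ξc : E d) (z : Fin H → Z),
      locIter (F c) γ ξc H θ z - θstar
        = (Bmat F ν γ θstar c ^ H) (θ - θstar)
          - γ • ∑ h : Fin H,
              (Bmat F ν γ θstar c ^ (H - (h : ℕ) - 1)) (ξc - xiStar F ν θstar c)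
          - γ • taylorRem F ν γ θstar c θ ξc z
          - γ • ∑ h : Fin H,
              (Bmat F ν γ θstar c ^ (H - (h : ℕ) - 1))
                (gradient (F c (z h)) (locIterLE (F c) γ ξc θ z (h : ℕ) h.isLt.le)
                  - gradient (fLoc F ν c) (locIterLE (F c) γ ξc θ z (h : ℕ) h.isLt.le)) :=
  scaffold_local_update_expansion_general γ F ν θstar hsmooth

end Scaffold
end
end
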